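/- Let Γ be a graph in [l] whose graphic arrangement A(Γ) has rank greater than 2. Then every 2-cocycle η : A(Γ) → 𝔽₂ is constant on A(Γ); that is, β_2(Γ) = 0. -/
import Mathlib


open scoped Classical

noncomputable section

/-- A (candidate) hyperplane in `ℂ^l`: a submodule of `Fin l → ℂ`. -/
abbrev Hyp (l : ℕ) := Submodule ℂ (Fin l → ℂ)

/-- `X` is a rank-2 flat of the central arrangement `A`. -/
def IsRank2Flat {l : ℕ} (A : Finset (Hyp l)) (X : Hyp l) : Prop :=
  ∃ H ∈ A, ∃ K ∈ A, H ≠ K ∧ X = H ⊓ K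

/-- The hyperplanes of `A` containing the flat `X` (so `m_X = (flatHyps A X).card`). -/
def flatHyps {l : ℕ} (A : Finset (Hyp l)) (X : Hyp l) : Finset {H // H ∈ A} :=
  A.attach.filter fun L => X ≤ (L : Hyp l)

/-- `η : A → 𝔽_p` is a `p`-cocycle: for every rank-2 flat `X`, the sum of `η` over `A_X`
vanishes when `p ∣ m_X`, and `η` is constant on `A_X` when `p ∤ m_X`. -/
def IsCocycle {l : ℕ} (p : ℕ) (A : Finset (Hyp l)) (η : {H // H ∈ A} → ZMod p) : Prop :=
  ∀ X : Hyp l, IsRank2Flat A X →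
    ((p ∣ (flatHyps A X).card → ∑ L ∈ flatHyps A X, η L = 0) ∧
     (¬ p ∣ (flatHyps A X).card →
       ∀ H ∈ flatHyps A X, ∀ K ∈ flatHyps A X, η H = η K))

/-- The rank of a central arrangement in `ℂ^l`: the codimension of the intersection of
all its hyperplanes. -/
def arrRank {l : ℕ} (A : Finset (Hyp l)) : ℕ :=
  l - Module.finrank ℂ ↥(A.inf id)

/-- A graph `Γ` in `[l]`: loops `E₁(Γ) ⊆ [l]`, and signed edges `ij^ε` (recorded with
`i < j`, the sign `ε` encoded by a `Bool`: `true ↦ +1`, `false ↦ -1`); a pair `{i,j}`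
may carry one signed edge (a simple edge) or both (a double edge). -/
structure SGraph (l : ℕ) where
  loops : Finset (Fin l)
  edges : Finset (Fin l × Fin l × Bool)
  edges_lt : ∀ e ∈ edges, e.1 < e.2.1

/-- The hyperplane `x_i = 0` of a loop at `i`. -/
def loopHyp {l : ℕ} (i : Fin l) : Hyp l :=
  LinearMap.ker (LinearMap.proj i : (Fin l → ℂ) →ₗ[ℂ] ℂ)

/-- The hyperplane `x_i + ε·x_j = 0` of a signed edge `ij^ε`. -/
def edgeHyp {l : ℕ} (i j : Fin l) (b : Bool) : Hyp l :=
  LinearMap.ker ((LinearMap.proj i : (Fin l → ℂ) →ₗ[ℂ] ℂ)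
    + (if b then (1 : ℂ) else -1) • (LinearMap.proj j : (Fin l → ℂ) →ₗ[ℂ] ℂ))

/-- The graphic arrangement `A(Γ)` in `ℂ^l`. -/
def graphArr {l : ℕ} (G : SGraph l) : Finset (Hyp l) :=
  G.loops.image loopHyp ∪ G.edges.image fun e => edgeHyp e.1 e.2.1 e.2.2

/-- The (unordered) signed edge `ij^ε` belongs to `Γ`. -/
def SGraph.hasEdge {l : ℕ} (G : SGraph l) (i j : Fin l) (b : Bool) : Prop :=
  (i, j, b) ∈ G.edges ∨ (j, i, b) ∈ G.edges

-- ===== basics =====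
namespace Beta2

variable {l : ℕ}

def sg (b : Bool) : ℂ := if b then 1 else -1

lemma sg_ne_zero (b : Bool) : sg b ≠ 0 := by cases b <;> simp [sg]

lemma sg_mul_self (b : Bool) : sg b * sg b = 1 := by cases b <;> simp [sg]

lemma mem_loopHyp {v : Fin l → ℂ} {i : Fin l} : v ∈ loopHyp i ↔ v i = 0 := by
  simp [loopHyp, LinearMap.mem_ker]

lemma mem_edgeHyp {v : Fin l → ℂ} {i j : Fin l} {b : Bool} :
    v ∈ edgeHyp i j b ↔ v i + sg b * v j = 0 := by
  cases b <;>
    simp [edgeHyp, LinearMap.mem_ker, sg, smul_eq_mul]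

lemma edgeHyp_symm (i j : Fin l) (b : Bool) : edgeHyp i j b = edgeHyp j i b := by
  ext v
  simp only [mem_edgeHyp]
  cases b <;> simp [sg]
  · exact ⟨fun h => by linear_combination -h, fun h => by linear_combination -h⟩
  · exact ⟨fun h => by linear_combination h, fun h => by linear_combination h⟩

lemma mem_graphArr {G : SGraph l} {L : Hyp l} :
    L ∈ graphArr G ↔ ((∃ i ∈ G.loops, L = loopHyp i) ∨
      ∃ e ∈ G.edges, L = edgeHyp e.1 e.2.1 e.2.2) := by
  simp [graphArr, eq_comm]

lemma mem_flatHyps {A : Finset (Hyp l)} {X : Hyp l} {L : {H // H ∈ A}} :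
    L ∈ flatHyps A X ↔ X ≤ (L : Hyp l) := by
  simp [flatHyps]

lemma zmod2_add_eq_zero {x y : ZMod 2} (h : x + y = 0) : x = y := by
  revert h; revert x y; decide



lemma pair_eq {A : Finset (Hyp l)} {η : {H // H ∈ A} → ZMod 2}
    (hη : IsCocycle 2 A η) (H K : {H // H ∈ A})
    (hcard : (flatHyps A ((H : Hyp l) ⊓ (K : Hyp l))).card ≤ 3) : η H = η K := by
  by_cases hvk : (H : Hyp l) = (K : Hyp l)
  · have : H = K := Subtype.ext hvk
    rw [this]
  set X : Hyp l := (H : Hyp l) ⊓ (K : Hyp l) with hX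
  have hflat : IsRank2Flat A X := ⟨H, H.2, K, K.2, hvk, rfl⟩
  have hHm : H ∈ flatHyps A X := mem_flatHyps.mpr inf_le_left
  have hKm : K ∈ flatHyps A X := mem_flatHyps.mpr inf_le_right
  have hne : H ≠ K := fun h => hvk (congrArg Subtype.val h)
  have h2 : 2 ≤ (flatHyps A X).card := by
    rw [Nat.succ_le_iff]
    exact Finset.one_lt_card.mpr ⟨H, hHm, K, hKm, hne⟩
  interval_cases hc : (flatHyps A X).card
  · -- card = 2
    have hsub : ({H, K} : Finset {H // H ∈ A}) ⊆ flatHyps A X := by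
      intro L hL
      rcases Finset.mem_insert.mp hL with h | h
      · rwa [h]
      · rw [Finset.mem_singleton.mp h]; exact hKm
    have hpc : ({H, K} : Finset {H // H ∈ A}).card = 2 := Finset.card_pair hne
    have heq : ({H, K} : Finset {H // H ∈ A}) = flatHyps A X :=
      Finset.eq_of_subset_of_card_le hsub (by omega)
    have hsum := (hη X hflat).1 (by omega)
    rw [← heq, Finset.sum_pair hne] at hsum
    exact zmod2_add_eq_zero hsum
  · -- card = 3
    exact (hη X hflat).2 (by omega) H hHm K hKm

lemma card_flat_le {A : Finset (Hyp l)} {X : Hyp l} {S : Finset (Hyp l)}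
    (h : ∀ L ∈ A, X ≤ L → L ∈ S) : (flatHyps A X).card ≤ S.card := by
  apply Finset.card_le_card_of_injOn Subtype.val
  · intro L hL
    exact h L L.2 (mem_flatHyps.mp hL)
  · exact fun a _ b _ h => Subtype.ext h



/-- A vector supported on at most three coordinates. -/
def vec3 (a b c : Fin l) (x y z : ℂ) : Fin l → ℂ :=
  fun k => if k = a then x else if k = b then y else if k = c then z else 0

lemma vec3_a {a b c : Fin l} {x y z : ℂ} : vec3 a b c x y z a = x := by simp [vec3]

lemma vec3_b {a b c : Fin l} {x y z : ℂ} (h : b ≠ a) : vec3 a b c x y z b = y := by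
  simp [vec3, h]

lemma vec3_c {a b c : Fin l} {x y z : ℂ} (h1 : c ≠ a) (h2 : c ≠ b) :
    vec3 a b c x y z c = z := by simp [vec3, h1, h2]

lemma vec3_other {a b c : Fin l} {x y z : ℂ} {k : Fin l}
    (h1 : k ≠ a) (h2 : k ≠ b) (h3 : k ≠ c) : vec3 a b c x y z k = 0 := by
  simp [vec3, h1, h2, h3]

lemma sg_eq (s t : Bool) (h : sg s = sg t) : s = t := by
  cases s <;> cases t <;> simp_all [sg] <;> norm_num at h

lemma sg_mul_eq_one (s t : Bool) (h : sg s * sg t = 1) : s = t := by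
  cases s <;> cases t <;> simp_all [sg] <;> norm_num at h

lemma sg_sq (t : Bool) : (1 : ℂ) + sg t * -sg t = 0 := by
  have := sg_mul_self t; linear_combination -this

/-- The standard basis vector as a `vec3`. -/
def ebas (m : Fin l) : Fin l → ℂ := vec3 m m m 1 1 1

lemma ebas_same {m : Fin l} : ebas m m = 1 := vec3_a

lemma ebas_other {m k : Fin l} (h : k ≠ m) : ebas m k = 0 := vec3_other h h h

/-- T2: the hyperplanes containing `loopHyp i ⊓ edgeHyp a b t` for `i ∉ {a,b}`. -/
lemma T2 {G : SGraph l} {i a b : Fin l} {t : Bool}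
    (hia : i ≠ a) (hib : i ≠ b) (hab : a ≠ b) :
    ∀ L ∈ graphArr G, loopHyp i ⊓ edgeHyp a b t ≤ L →
      L = loopHyp i ∨ L = edgeHyp a b t := by
  intro L hL hle
  -- witnesses
  set w : Fin l → ℂ := vec3 a b b 1 (-sg t) 0 with hw
  have hwX : w ∈ loopHyp i ⊓ edgeHyp a b t := by
    rw [Submodule.mem_inf, mem_loopHyp, mem_edgeHyp]
    constructor
    · exact vec3_other hia hib hib
    · rw [hw, vec3_a, vec3_b (Ne.symm hab)]; exact sg_sq t
  have heX : ∀ m : Fin l, m ≠ i → m ≠ a → m ≠ b → ebas m ∈ loopHyp i ⊓ edgeHyp a b t := by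
    intro m h1 h2 h3
    rw [Submodule.mem_inf, mem_loopHyp, mem_edgeHyp]
    refine ⟨ebas_other (Ne.symm h1), ?_⟩
    rw [ebas_other (Ne.symm h2), ebas_other (Ne.symm h3)]; ring
  rcases mem_graphArr.mp hL with ⟨m, _, rfl⟩ | ⟨e, he, rfl⟩
  · -- L = loopHyp m
    by_cases hm : m = i
    · subst hm; left; rfl
    exfalso
    by_cases hma : m = a
    · subst hma
      have := mem_loopHyp.mp (hle hwX)
      rw [hw, vec3_a] at this; exact one_ne_zero this
    by_cases hmb : m = b
    · subst hmb
      have := mem_loopHyp.mp (hle hwX)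
      rw [hw, vec3_b (Ne.symm hab)] at this
      exact sg_ne_zero t (neg_eq_zero.mp this)
    · have := mem_loopHyp.mp (hle (heX m hm hma hmb))
      rw [ebas_same] at this; exact one_ne_zero this
  · -- L = edgeHyp p q s
    obtain ⟨p, q, s⟩ := e
    have hpq : p ≠ q := Fin.ne_of_lt (G.edges_lt _ he)
    simp only at hle ⊢
    -- p, q ∈ {i, a, b}
    have key : ∀ r : Fin l, r ≠ i → r ≠ a → r ≠ b → (ebas r p + sg s * ebas r q ≠ 0 → False) := by
      intro r h1 h2 h3 h4
      exact h4 (mem_edgeHyp.mp (hle (heX r h1 h2 h3)))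
    have hpin : p = i ∨ p = a ∨ p = b := by
      by_contra hc
      push_neg at hc
      refine key p hc.1 hc.2.1 hc.2.2 ?_
      rw [ebas_same, ebas_other (Ne.symm hpq)]
      simp
    have hqin : q = i ∨ q = a ∨ q = b := by
      by_contra hc
      push_neg at hc
      refine key q hc.1 hc.2.1 hc.2.2 ?_
      rw [ebas_same, ebas_other hpq]
      simp [sg_ne_zero]
    have hwL := mem_edgeHyp.mp (hle hwX)
    rcases hpin with rfl | rfl | rfl <;> rcases hqin with rfl | rfl | rfl
    · exact absurd rfl hpq
    · -- (i, a)
      exfalso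
      rw [hw, vec3_other hia hib hib, vec3_a] at hwL
      simp [sg_ne_zero] at hwL
    · -- (i, b)
      exfalso
      rw [hw, vec3_other hia hib hib, vec3_b (Ne.symm hab)] at hwL
      simp [sg_ne_zero] at hwL
    · -- (a, i)
      exfalso
      rw [hw, vec3_a, vec3_other hia hib hib] at hwL
      simp at hwL
    · exact absurd rfl hpq
    · -- (a, b)
      right
      rw [hw, vec3_a, vec3_b (Ne.symm hab)] at hwL
      have : sg s * sg t = 1 := by linear_combination -hwL
      rw [sg_mul_eq_one s t this]
    · -- (b, i)
      exfalso
      rw [hw, vec3_b (Ne.symm hab), vec3_other hia hib hib] at hwL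
      simp [sg_ne_zero] at hwL
    · -- (b, a)
      right
      rw [hw, vec3_b (Ne.symm hab), vec3_a] at hwL
      have : sg s = sg t := by linear_combination hwL
      rw [sg_eq s t this, edgeHyp_symm]
    · exact absurd rfl hpq



lemma sg_spec (s t u : Bool) (h : sg s * sg u = -sg t) : s = xor t u := by
  cases s <;> cases t <;> cases u <;> simp_all [sg] <;> norm_num at h

/-- T1: the hyperplanes containing `loopHyp i ⊓ loopHyp j`. -/
lemma T1 {G : SGraph l} {i j : Fin l} (hij : i ≠ j) :
    ∀ L ∈ graphArr G, loopHyp i ⊓ loopHyp j ≤ L →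
      L = loopHyp i ∨ L = loopHyp j ∨ L = edgeHyp i j true ∨ L = edgeHyp i j false := by
  intro L hL hle
  have heX : ∀ m : Fin l, m ≠ i → m ≠ j → ebas m ∈ loopHyp i ⊓ loopHyp j := by
    intro m h1 h2
    rw [Submodule.mem_inf, mem_loopHyp, mem_loopHyp]
    exact ⟨ebas_other (Ne.symm h1), ebas_other (Ne.symm h2)⟩
  rcases mem_graphArr.mp hL with ⟨m, _, rfl⟩ | ⟨e, he, rfl⟩
  · by_cases hmi : m = i
    · subst hmi; left; rfl
    by_cases hmj : m = j
    · subst hmj; right; left; rfl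
    exfalso
    have := mem_loopHyp.mp (hle (heX m hmi hmj))
    rw [ebas_same] at this; exact one_ne_zero this
  · obtain ⟨p, q, s⟩ := e
    have hpq : p ≠ q := Fin.ne_of_lt (G.edges_lt _ he)
    simp only at hle ⊢
    have key : ∀ r : Fin l, r ≠ i → r ≠ j → ebas r p + sg s * ebas r q = 0 := by
      intro r h1 h2
      exact mem_edgeHyp.mp (hle (heX r h1 h2))
    have hpin : p = i ∨ p = j := by
      by_contra hc
      push_neg at hc
      have := key p hc.1 hc.2
      rw [ebas_same, ebas_other (Ne.symm hpq)] at this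
      simp at this
    have hqin : q = i ∨ q = j := by
      by_contra hc
      push_neg at hc
      have := key q hc.1 hc.2
      rw [ebas_same, ebas_other hpq] at this
      simp [sg_ne_zero] at this
    rcases hpin with rfl | rfl <;> rcases hqin with rfl | rfl
    · exact absurd rfl hpq
    · cases s
      · right; right; right; rfl
      · right; right; left; rfl
    · cases s
      · right; right; right; exact edgeHyp_symm _ _ _
      · right; right; left; exact edgeHyp_symm _ _ _
    · exact absurd rfl hpq

/-- T3: the hyperplanes containing a triangle flat `edgeHyp a b t ⊓ edgeHyp b c u`. -/
lemma T3 {G : SGraph l} {a b c : Fin l} {t u : Bool}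
    (hab : a ≠ b) (hac : a ≠ c) (hbc : b ≠ c) :
    ∀ L ∈ graphArr G, edgeHyp a b t ⊓ edgeHyp b c u ≤ L →
      L = edgeHyp a b t ∨ L = edgeHyp b c u ∨ L = edgeHyp a c (xor t u) := by
  intro L hL hle
  set w : Fin l → ℂ := vec3 a b c (-sg t) 1 (-sg u) with hw
  have hwa : w a = -sg t := vec3_a
  have hwb : w b = 1 := vec3_b (Ne.symm hab)
  have hwc : w c = -sg u := vec3_c (Ne.symm hac) (Ne.symm hbc)
  have hwX : w ∈ edgeHyp a b t ⊓ edgeHyp b c u := by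
    rw [Submodule.mem_inf, mem_edgeHyp, mem_edgeHyp, hwa, hwb, hwc]
    constructor
    · ring
    · exact sg_sq u
  have heX : ∀ m : Fin l, m ≠ a → m ≠ b → m ≠ c →
      ebas m ∈ edgeHyp a b t ⊓ edgeHyp b c u := by
    intro m h1 h2 h3
    rw [Submodule.mem_inf, mem_edgeHyp, mem_edgeHyp,
      ebas_other (Ne.symm h1), ebas_other (Ne.symm h2), ebas_other (Ne.symm h3)]
    constructor <;> ring
  rcases mem_graphArr.mp hL with ⟨m, _, rfl⟩ | ⟨e, he, rfl⟩
  · exfalso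
    have hwm := mem_loopHyp.mp (hle hwX)
    by_cases hma : m = a
    · subst hma; rw [hwa] at hwm; exact sg_ne_zero t (neg_eq_zero.mp hwm)
    by_cases hmb : m = b
    · subst hmb; rw [hwb] at hwm; exact one_ne_zero hwm
    by_cases hmc : m = c
    · subst hmc; rw [hwc] at hwm; exact sg_ne_zero u (neg_eq_zero.mp hwm)
    have := mem_loopHyp.mp (hle (heX m hma hmb hmc))
    rw [ebas_same] at this; exact one_ne_zero this
  · obtain ⟨p, q, s⟩ := e
    have hpq : p ≠ q := Fin.ne_of_lt (G.edges_lt _ he)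
    simp only at hle ⊢
    have key : ∀ r : Fin l, r ≠ a → r ≠ b → r ≠ c → ebas r p + sg s * ebas r q = 0 := by
      intro r h1 h2 h3
      exact mem_edgeHyp.mp (hle (heX r h1 h2 h3))
    have hpin : p = a ∨ p = b ∨ p = c := by
      by_contra hc
      push_neg at hc
      have := key p hc.1 hc.2.1 hc.2.2
      rw [ebas_same, ebas_other (Ne.symm hpq)] at this
      simp at this
    have hqin : q = a ∨ q = b ∨ q = c := by
      by_contra hc
      push_neg at hc
      have := key q hc.1 hc.2.1 hc.2.2
      rw [ebas_same, ebas_other hpq] at this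
      simp [sg_ne_zero] at this
    have hwL := mem_edgeHyp.mp (hle hwX)
    rcases hpin with rfl | rfl | rfl <;> rcases hqin with rfl | rfl | rfl
    · exact absurd rfl hpq
    · -- (a, b)
      left
      rw [hwa, hwb] at hwL
      have : sg s = sg t := by linear_combination hwL
      rw [sg_eq s t this]
    · -- (a, c)
      right; right
      rw [hwa, hwc] at hwL
      have : sg s * sg u = -sg t := by linear_combination -hwL
      rw [sg_spec s t u this]
    · -- (b, a)
      left
      rw [hwb, hwa] at hwL
      have : sg s * sg t = 1 := by linear_combination -hwL
      rw [sg_mul_eq_one s t this, edgeHyp_symm]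
    · exact absurd rfl hpq
    · -- (b, c)
      right; left
      rw [hwb, hwc] at hwL
      have : sg s * sg u = 1 := by linear_combination -hwL
      rw [sg_mul_eq_one s u this]
    · -- (c, a)
      right; right
      rw [hwc, hwa] at hwL
      have : sg s * sg t = -sg u := by linear_combination -hwL
      rw [sg_spec s u t this, edgeHyp_symm, Bool.xor_comm]
    · -- (c, b)
      right; left
      rw [hwc, hwb] at hwL
      have : sg s = sg u := by linear_combination hwL
      rw [sg_eq s u this, edgeHyp_symm]
    · exact absurd rfl hpq

/-- T4: the hyperplanes containing `edgeHyp a b t ⊓ edgeHyp c d u` for disjoint edges. -/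
lemma T4 {G : SGraph l} {a b c d : Fin l} {t u : Bool}
    (hab : a ≠ b) (hac : a ≠ c) (had : a ≠ d) (hbc : b ≠ c) (hbd : b ≠ d) (hcd : c ≠ d) :
    ∀ L ∈ graphArr G, edgeHyp a b t ⊓ edgeHyp c d u ≤ L →
      L = edgeHyp a b t ∨ L = edgeHyp c d u := by
  intro L hL hle
  set w1 : Fin l → ℂ := vec3 a b b 1 (-sg t) 0 with hw1
  set w2 : Fin l → ℂ := vec3 c d d 1 (-sg u) 0 with hw2
  have h1a : w1 a = 1 := vec3_a
  have h1b : w1 b = -sg t := vec3_b (Ne.symm hab)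
  have h1c : w1 c = 0 := vec3_other (Ne.symm hac) (Ne.symm hbc) (Ne.symm hbc)
  have h1d : w1 d = 0 := vec3_other (Ne.symm had) (Ne.symm hbd) (Ne.symm hbd)
  have h2c : w2 c = 1 := vec3_a
  have h2d : w2 d = -sg u := vec3_b (Ne.symm hcd)
  have h2a : w2 a = 0 := vec3_other hac had had
  have h2b : w2 b = 0 := vec3_other hbc hbd hbd
  have hw1X : w1 ∈ edgeHyp a b t ⊓ edgeHyp c d u := by
    rw [Submodule.mem_inf, mem_edgeHyp, mem_edgeHyp, h1a, h1b, h1c, h1d]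
    exact ⟨sg_sq t, by ring⟩
  have hw2X : w2 ∈ edgeHyp a b t ⊓ edgeHyp c d u := by
    rw [Submodule.mem_inf, mem_edgeHyp, mem_edgeHyp, h2a, h2b, h2c, h2d]
    exact ⟨by ring, sg_sq u⟩
  have heX : ∀ m : Fin l, m ≠ a → m ≠ b → m ≠ c → m ≠ d →
      ebas m ∈ edgeHyp a b t ⊓ edgeHyp c d u := by
    intro m g1 g2 g3 g4
    rw [Submodule.mem_inf, mem_edgeHyp, mem_edgeHyp, ebas_other (Ne.symm g1),
      ebas_other (Ne.symm g2), ebas_other (Ne.symm g3), ebas_other (Ne.symm g4)]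
    constructor <;> ring
  rcases mem_graphArr.mp hL with ⟨m, _, rfl⟩ | ⟨e, he, rfl⟩
  · exfalso
    have hm1 := mem_loopHyp.mp (hle hw1X)
    have hm2 := mem_loopHyp.mp (hle hw2X)
    by_cases g1 : m = a
    · subst g1; rw [h1a] at hm1; exact one_ne_zero hm1
    by_cases g2 : m = b
    · subst g2; rw [h1b] at hm1; exact sg_ne_zero t (neg_eq_zero.mp hm1)
    by_cases g3 : m = c
    · subst g3; rw [h2c] at hm2; exact one_ne_zero hm2
    by_cases g4 : m = d
    · subst g4; rw [h2d] at hm2; exact sg_ne_zero u (neg_eq_zero.mp hm2)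
    have := mem_loopHyp.mp (hle (heX m g1 g2 g3 g4))
    rw [ebas_same] at this; exact one_ne_zero this
  · obtain ⟨p, q, s⟩ := e
    have hpq : p ≠ q := Fin.ne_of_lt (G.edges_lt _ he)
    simp only at hle ⊢
    have key : ∀ r : Fin l, r ≠ a → r ≠ b → r ≠ c → r ≠ d →
        ebas r p + sg s * ebas r q = 0 := by
      intro r g1 g2 g3 g4
      exact mem_edgeHyp.mp (hle (heX r g1 g2 g3 g4))
    have hpin : p = a ∨ p = b ∨ p = c ∨ p = d := by
      by_contra hc'
      push_neg at hc'
      have := key p hc'.1 hc'.2.1 hc'.2.2.1 hc'.2.2.2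
      rw [ebas_same, ebas_other (Ne.symm hpq)] at this
      simp at this
    have hqin : q = a ∨ q = b ∨ q = c ∨ q = d := by
      by_contra hc'
      push_neg at hc'
      have := key q hc'.1 hc'.2.1 hc'.2.2.1 hc'.2.2.2
      rw [ebas_same, ebas_other hpq] at this
      simp [sg_ne_zero] at this
    have hL1 := mem_edgeHyp.mp (hle hw1X)
    have hL2 := mem_edgeHyp.mp (hle hw2X)
    rcases hpin with rfl | rfl | rfl | rfl <;> rcases hqin with rfl | rfl | rfl | rfl
    · exact absurd rfl hpq
    · -- (a,b)
      left
      rw [h1a, h1b] at hL1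
      have : sg s * sg t = 1 := by linear_combination -hL1
      rw [sg_mul_eq_one s t this]
    · exfalso; rw [h1a, h1c] at hL1; simp at hL1
    · exfalso; rw [h1a, h1d] at hL1; simp at hL1
    · -- (b,a)
      left
      rw [h1b, h1a] at hL1
      have : sg s = sg t := by linear_combination hL1
      rw [sg_eq s t this, edgeHyp_symm]
    · exact absurd rfl hpq
    · exfalso; rw [h1b, h1c] at hL1; simp [sg_ne_zero] at hL1
    · exfalso; rw [h1b, h1d] at hL1; simp [sg_ne_zero] at hL1
    · exfalso; rw [h1c, h1a] at hL1; simp [sg_ne_zero] at hL1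
    · exfalso; rw [h1c, h1b] at hL1; simp [sg_ne_zero] at hL1
    · exact absurd rfl hpq
    · -- (c,d)
      right
      rw [h2c, h2d] at hL2
      have : sg s * sg u = 1 := by linear_combination -hL2
      rw [sg_mul_eq_one s u this]
    · exfalso; rw [h1d, h1a] at hL1; simp [sg_ne_zero] at hL1
    · exfalso; rw [h1d, h1b] at hL1; simp [sg_ne_zero] at hL1
    · -- (d,c)
      right
      rw [h2d, h2c] at hL2
      have : sg s = sg u := by linear_combination hL2
      rw [sg_eq s u this, edgeHyp_symm]
    · exact absurd rfl hpq



lemma card_pair_le (x y : Hyp l) : ({x, y} : Finset (Hyp l)).card ≤ 2 := by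
  apply le_trans (Finset.card_insert_le _ _); simp

lemma card_triple_le (x y z : Hyp l) : ({x, y, z} : Finset (Hyp l)).card ≤ 3 := by
  apply le_trans (Finset.card_insert_le _ _)
  have := card_pair_le y z
  omega

lemma eq_T2 {G : SGraph l} {η : {H // H ∈ graphArr G} → ZMod 2}
    (hη : IsCocycle 2 (graphArr G) η) {i a b : Fin l} {t : Bool}
    (hia : i ≠ a) (hib : i ≠ b) (hab : a ≠ b)
    (h1 : loopHyp i ∈ graphArr G) (h2 : edgeHyp a b t ∈ graphArr G) :
    η ⟨loopHyp i, h1⟩ = η ⟨edgeHyp a b t, h2⟩ := by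
  apply pair_eq hη
  refine le_trans (card_flat_le (S := {loopHyp i, edgeHyp a b t}) ?_) ((card_pair_le _ _).trans (by omega))
  intro L hL hle
  rcases T2 hia hib hab L hL hle with h | h <;> simp [h]

lemma eq_T3 {G : SGraph l} {η : {H // H ∈ graphArr G} → ZMod 2}
    (hη : IsCocycle 2 (graphArr G) η) {a b c : Fin l} {t u : Bool}
    (hab : a ≠ b) (hac : a ≠ c) (hbc : b ≠ c)
    (h1 : edgeHyp a b t ∈ graphArr G) (h2 : edgeHyp b c u ∈ graphArr G) :
    η ⟨edgeHyp a b t, h1⟩ = η ⟨edgeHyp b c u, h2⟩ := by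
  apply pair_eq hη
  refine le_trans (card_flat_le
    (S := {edgeHyp a b t, edgeHyp b c u, edgeHyp a c (xor t u)}) ?_) (card_triple_le _ _ _)
  intro L hL hle
  rcases T3 hab hac hbc L hL hle with h | h | h <;> simp [h]

lemma eq_T4 {G : SGraph l} {η : {H // H ∈ graphArr G} → ZMod 2}
    (hη : IsCocycle 2 (graphArr G) η) {a b c d : Fin l} {t u : Bool}
    (hab : a ≠ b) (hac : a ≠ c) (had : a ≠ d) (hbc : b ≠ c) (hbd : b ≠ d) (hcd : c ≠ d)
    (h1 : edgeHyp a b t ∈ graphArr G) (h2 : edgeHyp c d u ∈ graphArr G) :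
    η ⟨edgeHyp a b t, h1⟩ = η ⟨edgeHyp c d u, h2⟩ := by
  apply pair_eq hη
  refine le_trans (card_flat_le (S := {edgeHyp a b t, edgeHyp c d u}) ?_) ((card_pair_le _ _).trans (by omega))
  intro L hL hle
  rcases T4 hab hac had hbc hbd hcd L hL hle with h | h <;> simp [h]

lemma exists_outside {G : SGraph l} (hrk : 2 < arrRank (graphArr G)) {i j : Fin l}
    (hij : i ≠ j) : ∃ L ∈ graphArr G, ¬ (loopHyp i ⊓ loopHyp j ≤ L) := by
  by_contra h
  push_neg at h
  have hXle : loopHyp i ⊓ loopHyp j ≤ (graphArr G).inf id := by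
    apply Finset.le_inf
    intro L hL
    exact h L hL
  set f : (Fin l → ℂ) →ₗ[ℂ] ℂ × ℂ :=
    (LinearMap.proj i : (Fin l → ℂ) →ₗ[ℂ] ℂ).prod (LinearMap.proj j) with hf
  have hker : LinearMap.ker f = loopHyp i ⊓ loopHyp j := by
    ext v
    simp [hf, LinearMap.mem_ker, LinearMap.prod_apply, Prod.ext_iff, Submodule.mem_inf,
      mem_loopHyp]
  have h1 : Module.finrank ℂ (LinearMap.range f) + Module.finrank ℂ (LinearMap.ker f)
      = Module.finrank ℂ (Fin l → ℂ) := LinearMap.finrank_range_add_finrank_ker f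
  have hdim : Module.finrank ℂ (Fin l → ℂ) = l := by simp
  have h2 : Module.finrank ℂ (LinearMap.range f) ≤ 2 := by
    have := Submodule.finrank_le (LinearMap.range f)
    have hprod : Module.finrank ℂ (ℂ × ℂ) = 2 := by simp
    omega
  have h3 : Module.finrank ℂ ↥(loopHyp i ⊓ loopHyp j)
      ≤ Module.finrank ℂ ↥((graphArr G).inf id) := Submodule.finrank_mono hXle
  rw [hker] at h1
  unfold arrRank at hrk
  omega



lemma loop_ne_loop {i j : Fin l} (hij : i ≠ j) : loopHyp i ≠ loopHyp j := by
  intro h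
  have h1 : ebas j ∈ loopHyp i := mem_loopHyp.mpr (ebas_other hij)
  rw [h, mem_loopHyp, ebas_same] at h1
  exact one_ne_zero h1

lemma loop_ne_edge_fst {i j : Fin l} (hij : i ≠ j) (t : Bool) :
    loopHyp i ≠ edgeHyp i j t := by
  intro h
  have h1 : ebas j ∈ loopHyp i := mem_loopHyp.mpr (ebas_other hij)
  rw [h, mem_edgeHyp, ebas_other hij, ebas_same] at h1
  simp [sg_ne_zero] at h1

lemma loop_ne_edge_snd {i j : Fin l} (hij : i ≠ j) (t : Bool) :
    loopHyp j ≠ edgeHyp i j t := by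
  intro h
  have h1 : ebas i ∈ loopHyp j := mem_loopHyp.mpr (ebas_other (Ne.symm hij))
  rw [h, mem_edgeHyp, ebas_same, ebas_other (Ne.symm hij)] at h1
  simp at h1

lemma edge_ne_edge {i j : Fin l} (hij : i ≠ j) : edgeHyp i j true ≠ edgeHyp i j false := by
  intro h
  set w : Fin l → ℂ := vec3 i j j 1 (-1) 0 with hw
  have h1 : w ∈ edgeHyp i j true := by
    rw [mem_edgeHyp, hw, vec3_a, vec3_b (Ne.symm hij)]
    simp [sg]
  rw [h, mem_edgeHyp, hw, vec3_a, vec3_b (Ne.symm hij)] at h1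
  simp [sg] at h1

lemma inf_loop_edge_left {i j : Fin l} (t : Bool) :
    loopHyp i ⊓ edgeHyp i j t = loopHyp i ⊓ loopHyp j := by
  ext v
  simp only [Submodule.mem_inf, mem_loopHyp, mem_edgeHyp]
  constructor
  · rintro ⟨h1, h2⟩
    refine ⟨h1, ?_⟩
    rw [h1, zero_add] at h2
    exact (mul_eq_zero.mp h2).resolve_left (sg_ne_zero t)
  · rintro ⟨h1, h2⟩
    rw [h1, h2]
    exact ⟨rfl, by ring⟩

lemma inf_loop_edge_right {i j : Fin l} (t : Bool) :
    loopHyp j ⊓ edgeHyp i j t = loopHyp i ⊓ loopHyp j := by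
  ext v
  simp only [Submodule.mem_inf, mem_loopHyp, mem_edgeHyp]
  constructor
  · rintro ⟨h1, h2⟩
    rw [h1, mul_zero, add_zero] at h2
    exact ⟨h2, h1⟩
  · rintro ⟨h1, h2⟩
    rw [h1, h2]
    exact ⟨rfl, by ring⟩

lemma inf_edge_edge {i j : Fin l} {t u : Bool} (htu : t ≠ u) :
    edgeHyp i j t ⊓ edgeHyp i j u = loopHyp i ⊓ loopHyp j := by
  ext v
  simp only [Submodule.mem_inf, mem_loopHyp, mem_edgeHyp]
  constructor
  · rintro ⟨h1, h2⟩
    cases t <;> cases u <;> simp [sg] at h1 h2 htu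
    · constructor
      · linear_combination h1 / 2 + h2 / 2
      · linear_combination h2 / 2 - h1 / 2
    · constructor
      · linear_combination h1 / 2 + h2 / 2
      · linear_combination h1 / 2 - h2 / 2
  · rintro ⟨h1, h2⟩
    rw [h1, h2]
    constructor <;> ring

lemma card_quad_le (x y z w : Hyp l) : ({x, y, z, w} : Finset (Hyp l)).card ≤ 4 := by
  apply le_trans (Finset.card_insert_le _ _)
  have := card_triple_le y z w
  omega

lemma quad_card3 {G : SGraph l} {i j : Fin l} (hij : i ≠ j) {q : Hyp l}
    (hmem : q = loopHyp i ∨ q = loopHyp j ∨ q = edgeHyp i j true ∨ q = edgeHyp i j false)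
    (hq : q ∉ graphArr G) :
    (flatHyps (graphArr G) (loopHyp i ⊓ loopHyp j)).card ≤ 3 := by
  have hqQ : q ∈ ({loopHyp i, loopHyp j, edgeHyp i j true, edgeHyp i j false} :
      Finset (Hyp l)) := by
    rcases hmem with rfl | rfl | rfl | rfl <;> simp
  refine le_trans (card_flat_le (S := ({loopHyp i, loopHyp j, edgeHyp i j true,
    edgeHyp i j false} : Finset (Hyp l)).erase q) ?_) ?_
  · intro L hL hle
    refine Finset.mem_erase.mpr ⟨fun h => hq (h ▸ hL), ?_⟩
    rcases T1 hij L hL hle with h | h | h | h <;> simp [h]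
  · rw [Finset.card_erase_of_mem hqQ]
    have := card_quad_le (loopHyp i) (loopHyp j) (edgeHyp i j true) (edgeHyp i j false)
    omega

lemma zmod2_main (a b c d : ZMod 2) : a + (b + (c + d)) = 0 → c = d → (b = c ∨ a = c) →
    a = b ∧ a = c ∧ a = d := by revert a b c d; decide

/-- The flat `X_{ij}` when all four hyperplanes of the quadruple are present. -/
lemma quad_flat {G : SGraph l} {i j : Fin l} (hij : i ≠ j)
    (h1 : loopHyp i ∈ graphArr G) (h2 : loopHyp j ∈ graphArr G)
    (h3 : edgeHyp i j true ∈ graphArr G) (h4 : edgeHyp i j false ∈ graphArr G) :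
    flatHyps (graphArr G) (loopHyp i ⊓ loopHyp j) =
      insert ⟨loopHyp i, h1⟩ (insert ⟨loopHyp j, h2⟩
        (insert ⟨edgeHyp i j true, h3⟩ ({⟨edgeHyp i j false, h4⟩} :
          Finset {H // H ∈ graphArr G}))) := by
  ext L
  simp only [mem_flatHyps, Finset.mem_insert, Finset.mem_singleton]
  constructor
  · intro hle
    rcases T1 hij (L : Hyp l) L.2 hle with h | h | h | h
    · exact Or.inl (Subtype.ext h)
    · exact Or.inr (Or.inl (Subtype.ext h))
    · exact Or.inr (Or.inr (Or.inl (Subtype.ext h)))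
    · exact Or.inr (Or.inr (Or.inr (Subtype.ext h)))
  · intro h
    have hedge : ∀ t : Bool, loopHyp i ⊓ loopHyp j ≤ edgeHyp i j t := by
      intro t v hv
      rw [Submodule.mem_inf, mem_loopHyp, mem_loopHyp] at hv
      rw [mem_edgeHyp, hv.1, hv.2]
      ring
    rcases h with rfl | rfl | rfl | rfl
    · exact inf_le_left
    · exact inf_le_right
    · exact hedge true
    · exact hedge false

/-- Rescue lemma: when the full quadruple over `{i,j}` is present and the rank
exceeds 2, all four values of the cocycle on the quadruple agree. -/
lemma rescue {G : SGraph l} (hrk : 2 < arrRank (graphArr G))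
    {η : {H // H ∈ graphArr G} → ZMod 2} (hη : IsCocycle 2 (graphArr G) η)
    {i j : Fin l} (hij : i ≠ j)
    (h1 : loopHyp i ∈ graphArr G) (h2 : loopHyp j ∈ graphArr G)
    (h3 : edgeHyp i j true ∈ graphArr G) (h4 : edgeHyp i j false ∈ graphArr G) :
    η ⟨loopHyp i, h1⟩ = η ⟨loopHyp j, h2⟩ ∧
    η ⟨loopHyp i, h1⟩ = η ⟨edgeHyp i j true, h3⟩ ∧
    η ⟨loopHyp i, h1⟩ = η ⟨edgeHyp i j false, h4⟩ := by
  set X : Hyp l := loopHyp i ⊓ loopHyp j with hXdef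
  have n12 := loop_ne_loop hij
  have n13 := loop_ne_edge_fst hij true
  have n14 := loop_ne_edge_fst hij false
  have n23 := loop_ne_edge_snd hij true
  have n24 := loop_ne_edge_snd hij false
  have n34 := edge_ne_edge hij
  have hfl := quad_flat hij h1 h2 h3 h4
  have hm4 : (⟨edgeHyp i j false, h4⟩ : {H // H ∈ graphArr G}) ∉
      (∅ : Finset {H // H ∈ graphArr G}) := Finset.notMem_empty _
  have hn3 : (⟨edgeHyp i j true, h3⟩ : {H // H ∈ graphArr G}) ∉
      ({⟨edgeHyp i j false, h4⟩} : Finset {H // H ∈ graphArr G}) := by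
    simp [Subtype.ext_iff, n34]
  have hn2 : (⟨loopHyp j, h2⟩ : {H // H ∈ graphArr G}) ∉
      (insert ⟨edgeHyp i j true, h3⟩ ({⟨edgeHyp i j false, h4⟩} :
        Finset {H // H ∈ graphArr G})) := by
    simp [Subtype.ext_iff, n23, n24]
  have hn1 : (⟨loopHyp i, h1⟩ : {H // H ∈ graphArr G}) ∉
      (insert ⟨loopHyp j, h2⟩ (insert ⟨edgeHyp i j true, h3⟩
        ({⟨edgeHyp i j false, h4⟩} : Finset {H // H ∈ graphArr G}))) := by
    simp [Subtype.ext_iff, n12, n13, n14]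
  have hcard : (flatHyps (graphArr G) X).card = 4 := by
    rw [hfl, Finset.card_insert_of_notMem hn1, Finset.card_insert_of_notMem hn2,
      Finset.card_insert_of_notMem hn3, Finset.card_singleton]
  have hflat : IsRank2Flat (graphArr G) X := ⟨loopHyp i, h1, loopHyp j, h2, n12, rfl⟩
  have hsum := (hη X hflat).1 (by rw [hcard]; norm_num)
  rw [hfl, Finset.sum_insert hn1, Finset.sum_insert hn2, Finset.sum_insert hn3,
    Finset.sum_singleton] at hsum
  -- find a hyperplane not containing X
  obtain ⟨L, hL, hnle⟩ := exists_outside hrk hij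
  rcases mem_graphArr.mp hL with ⟨m, _, rfl⟩ | ⟨⟨p, q, s⟩, hePQ, rfl⟩
  · -- L = loopHyp m with m ∉ {i, j}
    have hmi : m ≠ i := by
      rintro rfl
      exact hnle inf_le_left
    have hmj : m ≠ j := by
      rintro rfl
      exact hnle inf_le_right
    have hcd : η ⟨edgeHyp i j true, h3⟩ = η ⟨edgeHyp i j false, h4⟩ := by
      have e1 := eq_T2 hη hmi hmj hij hL h3
      have e2 := eq_T2 hη hmi hmj hij hL h4
      rw [← e1, e2]
    -- now get one more equation
    by_cases hmt : edgeHyp m i true ∈ graphArr G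
    · have e3 := eq_T3 hη hmi hmj hij hmt h3
      have e4 := eq_T2 hη (Ne.symm hmj) (Ne.symm hij) hmi h2 hmt
      exact zmod2_main _ _ _ _ hsum hcd (Or.inl (by rw [e4, e3]))
    · by_cases hmf : edgeHyp m i false ∈ graphArr G
      · have e3 := eq_T3 hη hmi hmj hij hmf h3
        have e4 := eq_T2 hη (Ne.symm hmj) (Ne.symm hij) hmi h2 hmf
        exact zmod2_main _ _ _ _ hsum hcd (Or.inl (by rw [e4, e3]))
      · -- no edges between m and i : loop m, loop i is a good pair
        have hgood : η ⟨loopHyp m, hL⟩ = η ⟨loopHyp i, h1⟩ := by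
          apply pair_eq hη
          exact quad_card3 hmi (Or.inr (Or.inr (Or.inl rfl))) hmt
        have e1 := eq_T2 hη hmi hmj hij hL h3
        exact zmod2_main _ _ _ _ hsum hcd (Or.inr (by rw [← hgood, e1]))
  · -- L = edgeHyp p q s
    have hpq : p ≠ q := Fin.ne_of_lt (G.edges_lt _ hePQ)
    simp only at hL hnle
    have hnboth : ¬ ((p = i ∨ p = j) ∧ (q = i ∨ q = j)) := by
      rintro ⟨hp, hq⟩
      apply hnle
      intro v hv
      rw [Submodule.mem_inf, mem_loopHyp, mem_loopHyp] at hv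
      rw [mem_edgeHyp]
      have hvp : v p = 0 := by
        rcases hp with rfl | rfl
        · exact hv.1
        · exact hv.2
      have hvq : v q = 0 := by
        rcases hq with rfl | rfl
        · exact hv.1
        · exact hv.2
      rw [hvp, hvq]; ring
    by_cases hpi : p = i
    · -- shared vertex p = i ; q ∉ {p, j}
      subst hpi
      have hqj : q ≠ j := by
        rintro rfl
        exact hnboth ⟨Or.inl rfl, Or.inr rfl⟩
      have h3' : edgeHyp j p true ∈ graphArr G := by rw [edgeHyp_symm]; exact h3
      have h4' : edgeHyp j p false ∈ graphArr G := by rw [edgeHyp_symm]; exact h4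
      have e3 := eq_T3 hη (Ne.symm hij) (Ne.symm hqj) hpq h3' hL
      have e4 := eq_T3 hη (Ne.symm hij) (Ne.symm hqj) hpq h4' hL
      have hc : η ⟨edgeHyp p j true, h3⟩ = η ⟨edgeHyp j p true, h3'⟩ := by
        congr 1
        exact Subtype.ext (edgeHyp_symm _ _ _)
      have hd : η ⟨edgeHyp p j false, h4⟩ = η ⟨edgeHyp j p false, h4'⟩ := by
        congr 1
        exact Subtype.ext (edgeHyp_symm _ _ _)
      have hcd : η ⟨edgeHyp p j true, h3⟩ = η ⟨edgeHyp p j false, h4⟩ := by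
        rw [hc, hd, e3, e4]
      have e5 := eq_T2 hη (Ne.symm hij) (Ne.symm hqj) hpq h2 hL
      exact zmod2_main _ _ _ _ hsum hcd (Or.inl (by rw [e5, hc, e3]))
    · by_cases hpj : p = j
      · -- shared vertex p = j ; q ∉ {p, i}
        subst hpj
        have hqi : q ≠ i := by
          rintro rfl
          exact hnboth ⟨Or.inr rfl, Or.inl rfl⟩
        have e3 := eq_T3 hη hij (Ne.symm hqi) hpq h3 hL
        have e4 := eq_T3 hη hij (Ne.symm hqi) hpq h4 hL
        have hcd : η ⟨edgeHyp i p true, h3⟩ = η ⟨edgeHyp i p false, h4⟩ := by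
          rw [e3, e4]
        have e5 := eq_T2 hη hij (Ne.symm hqi) hpq h1 hL
        exact zmod2_main _ _ _ _ hsum hcd (Or.inr (by rw [e5, ← e3]))
      · by_cases hqi : q = i
        · -- shared vertex q = i ; p ∉ {q, j}
          subst hqi
          have hL' : edgeHyp q p s ∈ graphArr G := by rw [edgeHyp_symm]; exact hL
          have h3' : edgeHyp j q true ∈ graphArr G := by rw [edgeHyp_symm]; exact h3
          have h4' : edgeHyp j q false ∈ graphArr G := by rw [edgeHyp_symm]; exact h4
          have e3 := eq_T3 hη (Ne.symm hij) (Ne.symm hpj) (Ne.symm hpq) h3' hL'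
          have e4 := eq_T3 hη (Ne.symm hij) (Ne.symm hpj) (Ne.symm hpq) h4' hL'
          have hc : η ⟨edgeHyp q j true, h3⟩ = η ⟨edgeHyp j q true, h3'⟩ := by
            congr 1
            exact Subtype.ext (edgeHyp_symm _ _ _)
          have hd : η ⟨edgeHyp q j false, h4⟩ = η ⟨edgeHyp j q false, h4'⟩ := by
            congr 1
            exact Subtype.ext (edgeHyp_symm _ _ _)
          have hcd : η ⟨edgeHyp q j true, h3⟩ = η ⟨edgeHyp q j false, h4⟩ := by
            rw [hc, hd, e3, e4]
          have e5 := eq_T2 hη (Ne.symm hij) (Ne.symm hpj) (Ne.symm hpq) h2 hL'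
          exact zmod2_main _ _ _ _ hsum hcd (Or.inl (by rw [e5, hc, e3]))
        · by_cases hqj : q = j
          · -- shared vertex q = j ; p ∉ {q, i}
            subst hqj
            have hL' : edgeHyp q p s ∈ graphArr G := by rw [edgeHyp_symm]; exact hL
            have e3 := eq_T3 hη hij (Ne.symm hpi) (Ne.symm hpq) h3 hL'
            have e4 := eq_T3 hη hij (Ne.symm hpi) (Ne.symm hpq) h4 hL'
            have hcd : η ⟨edgeHyp i q true, h3⟩ = η ⟨edgeHyp i q false, h4⟩ := by
              rw [e3, e4]
            have e5 := eq_T2 hη hij (Ne.symm hpi) (Ne.symm hpq) h1 hL'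
            exact zmod2_main _ _ _ _ hsum hcd (Or.inr (by rw [e5, ← e3]))
          · -- disjoint: p, q ∉ {i, j}
            have e1 := eq_T4 hη hpq hpi hpj hqi hqj hij hL h3
            have e2 := eq_T4 hη hpq hpi hpj hqi hqj hij hL h4
            have ea := eq_T2 hη (Ne.symm hpi) (Ne.symm hqi) hpq h1 hL
            have eb := eq_T2 hη (Ne.symm hpj) (Ne.symm hqj) hpq h2 hL
            refine ⟨by rw [ea, eb], by rw [ea, e1], by rw [ea, e2]⟩



lemma quad_eq {G : SGraph l} (hrk : 2 < arrRank (graphArr G))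
    {η : {H // H ∈ graphArr G} → ZMod 2} (hη : IsCocycle 2 (graphArr G) η)
    (i j : Fin l) (hij : i ≠ j) (H K : {H // H ∈ graphArr G})
    (hH : (H : Hyp l) = loopHyp i ∨ (H : Hyp l) = loopHyp j ∨
      (H : Hyp l) = edgeHyp i j true ∨ (H : Hyp l) = edgeHyp i j false)
    (hK : (K : Hyp l) = loopHyp i ∨ (K : Hyp l) = loopHyp j ∨
      (K : Hyp l) = edgeHyp i j true ∨ (K : Hyp l) = edgeHyp i j false)
    (hinf : (H : Hyp l) ⊓ (K : Hyp l) = loopHyp i ⊓ loopHyp j) : η H = η K := by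
  by_cases hall : loopHyp i ∈ graphArr G ∧ loopHyp j ∈ graphArr G ∧
      edgeHyp i j true ∈ graphArr G ∧ edgeHyp i j false ∈ graphArr G
  · obtain ⟨g1, g2, g3, g4⟩ := hall
    obtain ⟨r1, r2, r3⟩ := rescue hrk hη hij g1 g2 g3 g4
    have key : ∀ M : {H // H ∈ graphArr G},
        ((M : Hyp l) = loopHyp i ∨ (M : Hyp l) = loopHyp j ∨
         (M : Hyp l) = edgeHyp i j true ∨ (M : Hyp l) = edgeHyp i j false) →
        η M = η ⟨loopHyp i, g1⟩ := by
      intro M hM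
      rcases hM with h | h | h | h
      · rw [show M = ⟨loopHyp i, g1⟩ from Subtype.ext h]
      · rw [show M = ⟨loopHyp j, g2⟩ from Subtype.ext h]; exact r1.symm
      · rw [show M = ⟨edgeHyp i j true, g3⟩ from Subtype.ext h]; exact r2.symm
      · rw [show M = ⟨edgeHyp i j false, g4⟩ from Subtype.ext h]; exact r3.symm
    rw [key H hH, key K hK]
  · apply pair_eq hη
    rw [hinf]
    have hmiss : loopHyp i ∉ graphArr G ∨ loopHyp j ∉ graphArr G ∨
        edgeHyp i j true ∉ graphArr G ∨ edgeHyp i j false ∉ graphArr G := by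
      tauto
    rcases hmiss with h | h | h | h
    · exact quad_card3 hij (Or.inl rfl) h
    · exact quad_card3 hij (Or.inr (Or.inl rfl)) h
    · exact quad_card3 hij (Or.inr (Or.inr (Or.inl rfl))) h
    · exact quad_card3 hij (Or.inr (Or.inr (Or.inr rfl))) h

lemma loop_edge_eq {G : SGraph l} (hrk : 2 < arrRank (graphArr G))
    {η : {H // H ∈ graphArr G} → ZMod 2} (hη : IsCocycle 2 (graphArr G) η)
    {i p q : Fin l} {s : Bool} (hpq : p ≠ q)
    (H K : {H // H ∈ graphArr G}) (hHv : (H : Hyp l) = loopHyp i)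
    (hKv : (K : Hyp l) = edgeHyp p q s) : η H = η K := by
  by_cases hip : i = p
  · apply quad_eq hrk hη p q hpq H K
    · left; rw [hHv, hip]
    · cases s
      · right; right; right; exact hKv
      · right; right; left; exact hKv
    · rw [hHv, hKv, hip, inf_loop_edge_left]
  · by_cases hiq : i = q
    · apply quad_eq hrk hη p q hpq H K
      · right; left; rw [hHv, hiq]
      · cases s
        · right; right; right; exact hKv
        · right; right; left; exact hKv
      · rw [hHv, hKv, hiq, inf_loop_edge_right]
    · have hH' : H = ⟨loopHyp i, hHv ▸ H.2⟩ := Subtype.ext hHv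
      have hK' : K = ⟨edgeHyp p q s, hKv ▸ K.2⟩ := Subtype.ext hKv
      rw [hH', hK']
      exact eq_T2 hη hip hiq hpq _ _


end Beta2

open Beta2

/-- Let `Γ` be a graph in `[l]` whose graphic arrangement `A(Γ)` has rank greater
than 2. Then every 2-cocycle `η : A(Γ) → 𝔽₂` is constant on `A(Γ)`;
that is, `β₂(Γ) = 0`. -/
theorem beta2_vanishes {l : ℕ} (G : SGraph l)
    (hrk : 2 < arrRank (graphArr G))
    (η : {H // H ∈ graphArr G} → ZMod 2) (hη : IsCocycle 2 (graphArr G) η) :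
    ∀ H K : {H // H ∈ graphArr G}, η H = η K := by
  intro H K
  by_cases hvk : (H : Hyp l) = (K : Hyp l)
  · rw [Subtype.ext hvk]
  rcases mem_graphArr.mp H.2 with ⟨i, _, hHv⟩ | ⟨⟨p', q', u⟩, heH, hHv⟩ <;>
    rcases mem_graphArr.mp K.2 with ⟨k, _, hKv⟩ | ⟨⟨p, q, s⟩, heK, hKv⟩
  · -- loop, loop
    have hik : i ≠ k := by
      rintro rfl
      exact hvk (hHv.trans hKv.symm)
    apply quad_eq hrk hη i k hik H K (Or.inl hHv) (Or.inr (Or.inl hKv))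
    rw [hHv, hKv]
  · -- loop, edge
    simp only at hKv
    exact loop_edge_eq hrk hη (Fin.ne_of_lt (G.edges_lt _ heK)) H K hHv hKv
  · -- edge, loop
    simp only at hHv
    exact (loop_edge_eq hrk hη (Fin.ne_of_lt (G.edges_lt _ heH)) K H hKv hHv).symm
  · -- edge, edge
    simp only at hHv hKv
    have hpq : p < q := G.edges_lt _ heK
    have hpq' : p' < q' := G.edges_lt _ heH
    by_cases h1 : p' = p
    · by_cases h2 : q' = q
      · -- same pair
        by_cases hsu : u = s
        · exact absurd (by rw [hHv, hKv, h1, h2, hsu]) hvk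
        · apply quad_eq hrk hη p q (Fin.ne_of_lt hpq) H K
          · cases u
            · right; right; right; rw [hHv, h1, h2]
            · right; right; left; rw [hHv, h1, h2]
          · cases s
            · right; right; right; exact hKv
            · right; right; left; exact hKv
          · rw [hHv, hKv, h1, h2, inf_edge_edge hsu]
      · -- shared vertex p (p' = p, q' ∉ {p, q}) : triangle (q', p, q)
        have hq'p : q' ≠ p := Ne.symm (Fin.ne_of_lt (h1 ▸ hpq'))
        have hval : (H : Hyp l) = edgeHyp q' p u := by
          rw [hHv, h1, edgeHyp_symm]
        have hH' : H = ⟨edgeHyp q' p u, hval ▸ H.2⟩ := Subtype.ext hval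
        have hK' : K = ⟨edgeHyp p q s, hKv ▸ K.2⟩ := Subtype.ext hKv
        rw [hH', hK']
        exact eq_T3 hη hq'p h2 (Fin.ne_of_lt hpq) _ _
    · by_cases h3 : p' = q
      · -- shared vertex q (p' = q) : triangle (q', q, p)
        have hq'q : q' ≠ q := Ne.symm (Fin.ne_of_lt (h3 ▸ hpq'))
        have hq'p : q' ≠ p := Ne.symm (Fin.ne_of_lt (lt_trans hpq (h3 ▸ hpq')))
        have hval : (H : Hyp l) = edgeHyp q' q u := by
          rw [hHv, h3, edgeHyp_symm]
        have hvalK : (K : Hyp l) = edgeHyp q p s := by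
          rw [hKv, edgeHyp_symm]
        have hH' : H = ⟨edgeHyp q' q u, hval ▸ H.2⟩ := Subtype.ext hval
        have hK' : K = ⟨edgeHyp q p s, hvalK ▸ K.2⟩ := Subtype.ext hvalK
        rw [hH', hK']
        exact eq_T3 hη hq'q hq'p (Ne.symm (Fin.ne_of_lt hpq)) _ _
      · by_cases h4 : q' = p
        · -- shared vertex p (q' = p) : triangle (p', p, q)
          have hp'p : p' ≠ p := Fin.ne_of_lt (h4 ▸ hpq')
          have hp'q : p' ≠ q := Fin.ne_of_lt (lt_trans (h4 ▸ hpq') hpq)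
          have hval : (H : Hyp l) = edgeHyp p' p u := by rw [hHv, h4]
          have hH' : H = ⟨edgeHyp p' p u, hval ▸ H.2⟩ := Subtype.ext hval
          have hK' : K = ⟨edgeHyp p q s, hKv ▸ K.2⟩ := Subtype.ext hKv
          rw [hH', hK']
          exact eq_T3 hη hp'p hp'q (Fin.ne_of_lt hpq) _ _
        · by_cases h5 : q' = q
          · -- shared vertex q (q' = q) : triangle (p', q, p)
            have hval : (H : Hyp l) = edgeHyp p' q u := by rw [hHv, h5]
            have hvalK : (K : Hyp l) = edgeHyp q p s := by
              rw [hKv, edgeHyp_symm]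
            have hH' : H = ⟨edgeHyp p' q u, hval ▸ H.2⟩ := Subtype.ext hval
            have hK' : K = ⟨edgeHyp q p s, hvalK ▸ K.2⟩ := Subtype.ext hvalK
            rw [hH', hK']
            exact eq_T3 hη (h5 ▸ Fin.ne_of_lt hpq') h1 (Ne.symm (Fin.ne_of_lt hpq)) _ _
          · -- disjoint edges
            have hH' : H = ⟨edgeHyp p' q' u, hHv ▸ H.2⟩ := Subtype.ext hHv
            have hK' : K = ⟨edgeHyp p q s, hKv ▸ K.2⟩ := Subtype.ext hKv
            rw [hH', hK']
            exact eq_T4 hη (Fin.ne_of_lt hpq') h1 h3 h4 h5 (Fin.ne_of_lt hpq) _ _
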